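/- Dual averaging regret bound (bound on Ψ₁): Let X ⊆ ℝ^d be closed and convex, let ‖·‖ be a norm on ℝ^d with dual norm ‖·‖_*, let ψ : ℝ^d → ℝ be nonnegative and 1-strongly convex on X with respect to ‖·‖, and let α : ℕ → ℝ be positive and nonincreasing. Let ḡ(1), ḡ(2), … ∈ ℝ^d, define z̄(1) = 0 and z̄(t+1) = z̄(t) + ḡ(t), and for each t ≥ 1 let y(t) be a minimizer over X of x ↦ ⟨x, z̄(t)⟩ + ψ(x)/α(t−1). Then for every T ≥ 1 and every x* ∈ X, ∑_{t=1}^T ⟨ḡ(t), y(t) − x*⟩ ≤ ∑_{t=1}^T α(t−1)·‖ḡ(t)‖_*² + ψ(x*)/α(T). -/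

import Mathlib

/-! Let `Fₜ(x) = ⟪x, z̄(t)⟫ + ψ(x)/α(t-1)`, minimized over `X` at `y(t)`. Strong convexity makes
`Fₜ` grow by `N(x - y(t))²/(2α(t-1))` away from its minimizer, and by Young's inequality this growth
pays for the linear term `⟪ḡ(t), y(t) - y(t+1)⟫`. As `α` is nonincreasing and `ψ ≥ 0`, this gives
`Fₜ₊₁(y(t+1)) ≥ Fₜ(y(t)) + ⟪ḡ(t), y(t)⟫ - α(t-1)‖ḡ(t)‖_*²/2`. Telescoping from `F₁(y(1)) ≥ 0` and
comparing `F_{T+1}(y(T+1))` with `F_{T+1}(x*) = ∑ ⟪ḡ(t), x*⟫ + ψ(x*)/α(T)` gives the bound. -/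

open Finset RealInnerProductSpace

/-- The dual norm `‖z‖_* = sup {⟨z, x⟩ : N x ≤ 1}` of a norm `N` on `ℝ^d`. -/
noncomputable def dualNorm {d : ℕ} (N : EuclideanSpace ℝ (Fin d) → ℝ)
    (z : EuclideanSpace ℝ (Fin d)) : ℝ :=
  sSup {r : ℝ | ∃ x : EuclideanSpace ℝ (Fin d), N x ≤ 1 ∧ r = ⟪z, x⟫}

/-- `N` is a norm on `ℝ^d` (triangle inequality, absolute homogeneity, definiteness). -/
def IsNorm {d : ℕ} (N : EuclideanSpace ℝ (Fin d) → ℝ) : Prop :=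
  (∀ x y, N (x + y) ≤ N x + N y) ∧ (∀ (c : ℝ) x, N (c • x) = |c| * N x) ∧
    (∀ x, N x = 0 ↔ x = 0)

/-- `ψ` is 1-strongly convex on `X` with respect to the norm `N`. -/
def StronglyConvexOnWith {d : ℕ} (X : Set (EuclideanSpace ℝ (Fin d)))
    (N : EuclideanSpace ℝ (Fin d) → ℝ) (ψ : EuclideanSpace ℝ (Fin d) → ℝ) : Prop :=
  ∀ ⦃x⦄, x ∈ X → ∀ ⦃y⦄, y ∈ X → ∀ ⦃θ : ℝ⦄, 0 ≤ θ → θ ≤ 1 →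
    ψ (θ • x + (1 - θ) • y) ≤ θ * ψ x + (1 - θ) * ψ y - θ * (1 - θ) / 2 * N (x - y) ^ 2

namespace IsNorm

variable {d : ℕ} {N : EuclideanSpace ℝ (Fin d) → ℝ}

def toSeminorm (hN : IsNorm N) : Seminorm ℝ (EuclideanSpace ℝ (Fin d)) :=
  Seminorm.of N hN.1 hN.2.1

theorem nonneg (hN : IsNorm N) (x : EuclideanSpace ℝ (Fin d)) : 0 ≤ N x :=
  apply_nonneg hN.toSeminorm x

theorem map_sub_rev (hN : IsNorm N) (x y : EuclideanSpace ℝ (Fin d)) : N (x - y) = N (y - x) :=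
  _root_.map_sub_rev hN.toSeminorm x y

theorem continuous (hN : IsNorm N) : Continuous N :=
  continuousOn_univ.1 (hN.toSeminorm.convexOn.continuousOn isOpen_univ)

theorem exists_pos_mul_norm_le (hN : IsNorm N) : ∃ m > 0, ∀ x, m * ‖x‖ ≤ N x := by
  have hpos : ∀ u ∈ Metric.sphere (0 : EuclideanSpace ℝ (Fin d)) 1, 0 < N u := fun u hu ↦
    (hN.nonneg u).lt_of_ne' fun h ↦ by simp [(hN.2.2 u).1 h] at hu
  obtain ⟨m, hm, hmN⟩ :=
    (isCompact_sphere 0 1).exists_forall_le' hN.continuous.continuousOn hpos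
  refine ⟨m, hm, fun x ↦ ?_⟩
  rcases eq_or_ne x 0 with rfl | hx
  · simp [hN.nonneg]
  have hx' : 0 < ‖x‖ := norm_pos_iff.2 hx
  have hunit := hmN (‖x‖⁻¹ • x) (by simp [norm_smul, hx'.ne'])
  rw [hN.2.1, abs_of_pos (inv_pos.2 hx')] at hunit
  calc m * ‖x‖ ≤ ‖x‖⁻¹ * N x * ‖x‖ := by gcongr
    _ = N x := by field_simp

theorem bddAbove_inner_unitBall (hN : IsNorm N) (g : EuclideanSpace ℝ (Fin d)) :
    BddAbove {r : ℝ | ∃ x : EuclideanSpace ℝ (Fin d), N x ≤ 1 ∧ r = ⟪g, x⟫} := by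
  obtain ⟨m, hm, hmN⟩ := hN.exists_pos_mul_norm_le
  refine ⟨‖g‖ / m, ?_⟩
  rintro _ ⟨x, hx, rfl⟩
  have hxm : ‖x‖ ≤ 1 / m := by rw [le_div_iff₀ hm]; linarith [hmN x]
  calc ⟪g, x⟫ ≤ ‖g‖ * ‖x‖ := real_inner_le_norm g x
    _ ≤ ‖g‖ * (1 / m) := by gcongr
    _ = ‖g‖ / m := by ring

theorem inner_le_dualNorm_mul (hN : IsNorm N) (g w : EuclideanSpace ℝ (Fin d)) :
    ⟪g, w⟫ ≤ dualNorm N g * N w := by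
  rcases (hN.nonneg w).eq_or_lt with hw | hw
  · rw [← hw, (hN.2.2 w).1 hw.symm]; simp
  have hunit : ⟪g, (N w)⁻¹ • w⟫ ≤ dualNorm N g :=
    le_csSup (hN.bddAbove_inner_unitBall g)
      ⟨_, by rw [hN.2.1, abs_of_pos (inv_pos.2 hw), inv_mul_cancel₀ hw.ne'], rfl⟩
  rw [real_inner_smul_right] at hunit
  calc ⟪g, w⟫ = (N w)⁻¹ * ⟪g, w⟫ * N w := by field_simp
    _ ≤ dualNorm N g * N w := by gcongr

end IsNorm

theorem add_le_of_le_segment_of_strongConvex {E : Type*} [AddCommGroup E] [Module ℝ E]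
    {F : E → ℝ} {y v : E} {c : ℝ}
    (hmin : ∀ θ ∈ Set.Ioo (0 : ℝ) 1, F y ≤ F (θ • v + (1 - θ) • y))
    (hconv : ∀ θ ∈ Set.Ioo (0 : ℝ) 1,
      F (θ • v + (1 - θ) • y) ≤ θ * F v + (1 - θ) * F y - θ * (1 - θ) * c) :
    F y + c ≤ F v := by
  have hbound : ∀ θ ∈ Set.Ioo (0 : ℝ) 1, F y + (1 - θ) * c ≤ F v := by
    intro θ hθ
    have h := (hmin θ hθ).trans (hconv θ hθ)
    nlinarith [hθ.1]
  have hlim : Filter.Tendsto (fun θ : ℝ ↦ F y + (1 - θ) * c) (nhdsWithin 0 (Set.Ioi 0))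
      (nhds (F y + c)) := by
    have : Continuous fun θ : ℝ ↦ F y + (1 - θ) * c := by fun_prop
    simpa using (this.tendsto 0).mono_left nhdsWithin_le_nhds
  exact le_of_tendsto hlim (Filter.mem_of_superset (Ioo_mem_nhdsGT one_pos) hbound)

theorem add_sum_Icc_le_of_add_le {M : Type*} [AddCommMonoid M] [PartialOrder M]
    [IsOrderedAddMonoid M] {u b : ℕ → M} (h : ∀ t, 1 ≤ t → u t + b t ≤ u (t + 1)) (T : ℕ) :
    u 1 + ∑ t ∈ Icc 1 T, b t ≤ u (T + 1) := by
  induction T with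
  | zero => simp
  | succ T ih =>
    rw [sum_Icc_succ_top (by omega : 1 ≤ T + 1), ← add_assoc]
    exact (add_le_add_left ih _).trans (h (T + 1) (by omega))

theorem eq_sum_Icc_of_eq_add {M : Type*} [AddCommMonoid M] {z g : ℕ → M} (h1 : z 1 = 0)
    (h : ∀ t, 1 ≤ t → z (t + 1) = z t + g t) (T : ℕ) : z (T + 1) = ∑ t ∈ Icc 1 T, g t := by
  induction T with
  | zero => simpa using h1
  | succ T ih => rw [sum_Icc_succ_top (by omega : 1 ≤ T + 1), ← ih, h _ (by omega)]

section DualAveraging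

variable {d : ℕ} {X : Set (EuclideanSpace ℝ (Fin d))} {N ψ : EuclideanSpace ℝ (Fin d) → ℝ}

theorem StronglyConvexOnWith.add_sq_div_le_of_forall_le (hψ : StronglyConvexOnWith X N ψ)
    (hX : Convex ℝ X) {a : ℝ} (ha : 0 < a) {y z v : EuclideanSpace ℝ (Fin d)}
    (hy : y ∈ X) (hv : v ∈ X) (hmin : ∀ w ∈ X, ⟪y, z⟫ + ψ y / a ≤ ⟪w, z⟫ + ψ w / a) :
    ⟪y, z⟫ + ψ y / a + N (v - y) ^ 2 / (2 * a) ≤ ⟪v, z⟫ + ψ v / a := by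
  refine add_le_of_le_segment_of_strongConvex (F := fun w ↦ ⟪w, z⟫ + ψ w / a)
    (fun θ hθ ↦ hmin _ (hX hv hy hθ.1.le (by linarith [hθ.2]) (by ring))) fun θ hθ ↦ ?_
  have hψθ := div_le_div_of_nonneg_right (hψ hv hy hθ.1.le hθ.2.le) ha.le
  calc ⟪θ • v + (1 - θ) • y, z⟫ + ψ (θ • v + (1 - θ) • y) / a
      = θ * ⟪v, z⟫ + (1 - θ) * ⟪y, z⟫ + ψ (θ • v + (1 - θ) • y) / a := by
        rw [inner_add_left, real_inner_smul_left, real_inner_smul_left]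
    _ ≤ θ * ⟪v, z⟫ + (1 - θ) * ⟪y, z⟫ +
        (θ * ψ v + (1 - θ) * ψ y - θ * (1 - θ) / 2 * N (v - y) ^ 2) / a := by linarith
    _ = _ := by field_simp; ring

theorem dual_averaging_step (hN : IsNorm N) (hX : Convex ℝ X) (hψ0 : ∀ x, 0 ≤ ψ x)
    (hψ : StronglyConvexOnWith X N ψ) {a a' : ℝ} (ha' : 0 < a') (ha'a : a' ≤ a)
    {y y' z g : EuclideanSpace ℝ (Fin d)} (hy : y ∈ X) (hy' : y' ∈ X)
    (hmin : ∀ w ∈ X, ⟪y, z⟫ + ψ y / a ≤ ⟪w, z⟫ + ψ w / a) :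
    ⟪y, z⟫ + ψ y / a + (⟪g, y⟫ - a / 2 * dualNorm N g ^ 2) ≤ ⟪y', z + g⟫ + ψ y' / a' := by
  have ha : 0 < a := ha'.trans_le ha'a
  have hgrowth := hψ.add_sq_div_le_of_forall_le hX ha hy hy' hmin
  have hpair := hN.inner_le_dualNorm_mul g (y - y')
  rw [hN.map_sub_rev] at hpair
  -- Young's inequality `‖g‖_* N(y' - y) ≤ N(y' - y)² / (2a) + a ‖g‖_*² / 2`
  have hyoung : 0 ≤ (N (y' - y) - a * dualNorm N g) ^ 2 / (2 * a) := by positivity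
  have hstep : ψ y' / a ≤ ψ y' / a' := div_le_div_of_nonneg_left (hψ0 y') ha' ha'a
  have hexpand : (N (y' - y) - a * dualNorm N g) ^ 2 / (2 * a) =
      N (y' - y) ^ 2 / (2 * a) - dualNorm N g * N (y' - y) + a / 2 * dualNorm N g ^ 2 := by
    field_simp; ring
  rw [inner_sub_right] at hpair
  rw [inner_add_right, real_inner_comm g y']
  linarith

end DualAveraging

theorem dual_averaging_regret_general {d : ℕ}
    (X : Set (EuclideanSpace ℝ (Fin d))) (hXcv : Convex ℝ X)
    (N : EuclideanSpace ℝ (Fin d) → ℝ) (hN : IsNorm N)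
    (ψ : EuclideanSpace ℝ (Fin d) → ℝ) (hψ0 : ∀ x, 0 ≤ ψ x)
    (hψ : StronglyConvexOnWith X N ψ)
    (α : ℕ → ℝ) (hαpos : ∀ t, 0 < α t) (hαdec : ∀ s t, s ≤ t → α t ≤ α s)
    (gbar : ℕ → EuclideanSpace ℝ (Fin d))
    (zbar : ℕ → EuclideanSpace ℝ (Fin d))
    (hz1 : zbar 1 = 0) (hzrec : ∀ t, 1 ≤ t → zbar (t + 1) = zbar t + gbar t)
    (y : ℕ → EuclideanSpace ℝ (Fin d))
    (hyX : ∀ t, 1 ≤ t → y t ∈ X)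
    (hymin : ∀ t, 1 ≤ t → ∀ v ∈ X,
      ⟪y t, zbar t⟫ + ψ (y t) / α (t - 1) ≤ ⟪v, zbar t⟫ + ψ v / α (t - 1))
    (T : ℕ) (xstar : EuclideanSpace ℝ (Fin d)) (hxstar : xstar ∈ X) :
    ∑ t ∈ Icc 1 T, ⟪gbar t, y t - xstar⟫ ≤
      (∑ t ∈ Icc 1 T, α (t - 1) * dualNorm N (gbar t) ^ 2) + ψ xstar / α T := by
  set F : ℕ → EuclideanSpace ℝ (Fin d) → ℝ := fun t x ↦ ⟪x, zbar t⟫ + ψ x / α (t - 1)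
  have hstep : ∀ t, 1 ≤ t →
      F t (y t) + (⟪gbar t, y t⟫ - α (t - 1) / 2 * dualNorm N (gbar t) ^ 2) ≤
        F (t + 1) (y (t + 1)) := fun t ht ↦ by
    simpa [F, hzrec t ht] using dual_averaging_step hN hXcv hψ0 hψ (hαpos t)
      (hαdec _ _ (Nat.sub_le t 1)) (hyX t ht) (hyX (t + 1) (by omega)) (hymin t ht)
  have htele := add_sum_Icc_le_of_add_le hstep T
  have hF1 : 0 ≤ F 1 (y 1) := by
    simpa [F, hz1] using div_nonneg (hψ0 (y 1)) (hαpos 0).le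
  have hlast : F (T + 1) (y (T + 1)) ≤ F (T + 1) xstar := hymin (T + 1) (by omega) xstar hxstar
  have hFxstar : F (T + 1) xstar = ∑ t ∈ Icc 1 T, ⟪gbar t, xstar⟫ + ψ xstar / α T := by
    simp [F, eq_sum_Icc_of_eq_add hz1 hzrec T, inner_sum, real_inner_comm]
  have hhalf : ∑ t ∈ Icc 1 T, α (t - 1) / 2 * dualNorm N (gbar t) ^ 2 ≤
      ∑ t ∈ Icc 1 T, α (t - 1) * dualNorm N (gbar t) ^ 2 :=
    sum_le_sum fun t _ ↦ mul_le_mul_of_nonneg_right (half_le_self (hαpos _).le) (sq_nonneg _)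
  simp only [sum_sub_distrib] at htele
  simp only [inner_sub_right, sum_sub_distrib]
  linarith

/-- **Dual averaging regret bound (bound on Ψ₁).**  With `z̄(1) = 0`,
`z̄(t+1) = z̄(t) + ḡ(t)`, and `y(t)` a minimizer over `X` of
`x ↦ ⟨x, z̄(t)⟩ + ψ(x)/α(t−1)`, one has
`∑_{t=1}^T ⟨ḡ(t), y(t) − x*⟩ ≤ ∑_{t=1}^T α(t−1) ‖ḡ(t)‖_*² + ψ(x*)/α(T)`. -/
theorem dual_averaging_regret {d : ℕ}
    (X : Set (EuclideanSpace ℝ (Fin d))) (hXcl : IsClosed X) (hXcv : Convex ℝ X)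
    (N : EuclideanSpace ℝ (Fin d) → ℝ) (hN : IsNorm N)
    (ψ : EuclideanSpace ℝ (Fin d) → ℝ) (hψ0 : ∀ x, 0 ≤ ψ x)
    (hψ : StronglyConvexOnWith X N ψ)
    (α : ℕ → ℝ) (hαpos : ∀ t, 0 < α t) (hαdec : ∀ s t, s ≤ t → α t ≤ α s)
    (gbar : ℕ → EuclideanSpace ℝ (Fin d))
    (zbar : ℕ → EuclideanSpace ℝ (Fin d))
    (hz1 : zbar 1 = 0) (hzrec : ∀ t, 1 ≤ t → zbar (t + 1) = zbar t + gbar t)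
    (y : ℕ → EuclideanSpace ℝ (Fin d))
    (hyX : ∀ t, 1 ≤ t → y t ∈ X)
    (hymin : ∀ t, 1 ≤ t → ∀ v ∈ X,
      ⟪y t, zbar t⟫ + ψ (y t) / α (t - 1) ≤ ⟪v, zbar t⟫ + ψ v / α (t - 1))
    (T : ℕ) (hT : 1 ≤ T) (xstar : EuclideanSpace ℝ (Fin d)) (hxstar : xstar ∈ X) :
    ∑ t ∈ Icc 1 T, ⟪gbar t, y t - xstar⟫ ≤
      (∑ t ∈ Icc 1 T, α (t - 1) * dualNorm N (gbar t) ^ 2) + ψ xstar / α T :=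
  dual_averaging_regret_general X hXcv N hN ψ hψ0 hψ α hαpos hαdec gbar zbar hz1 hzrec y hyX hymin T
    xstar hxstar
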